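/- Let S ⊂ H be in general position (for any distinct a,b ∈ S and all i, a_i ≠ b_i), and let T ⊆ S with |T| > n. Then the cell V_T = {x ∈ H : D_S(x) = T} is empty, where D_S(x) = {b ∈ S : d_△(x,b) = min_{c∈S} d_△(x,c)}. -/

import Mathlib

/-! For `x` and `b` with equal coordinate sums, `dtri x b = n · maxᵢ (xᵢ - bᵢ)`, so the distance
is governed by a single coordinate where `b - x` is minimal. If `x` is equidistant from `n + 1`
sites, two of them share this coordinate `i`, and equal distances force their `i`-th
coordinates to agree, which general position forbids. -/

noncomputable def tmin {n : ℕ} [NeZero n] (f : Fin n → ℝ) : ℝ :=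
  Finset.univ.inf' Finset.univ_nonempty f

noncomputable def dtri {n : ℕ} [NeZero n] (a b : Fin n → ℝ) : ℝ :=
  (∑ i, (b i - a i)) - n * tmin (fun i => b i - a i)

section

variable {n : ℕ} [NeZero n]

theorem exists_tmin_eq (f : Fin n → ℝ) : ∃ i, tmin f = f i := by
  obtain ⟨i, -, hi⟩ := Finset.exists_mem_eq_inf' Finset.univ_nonempty f
  exact ⟨i, hi⟩

theorem dtri_eq_neg_mul_tmin {a b : Fin n → ℝ} (h : ∑ i, a i = ∑ i, b i) :
    dtri a b = -(n * tmin fun i => b i - a i) := by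
  rw [dtri, Finset.sum_sub_distrib, h, sub_self, zero_sub]

theorem tmin_sub_eq_of_dtri_eq {x b c : Fin n → ℝ} (hb : ∑ i, x i = ∑ i, b i)
    (hc : ∑ i, x i = ∑ i, c i) (h : dtri x b = dtri x c) :
    (tmin fun i => b i - x i) = tmin fun i => c i - x i := by
  rw [dtri_eq_neg_mul_tmin hb, dtri_eq_neg_mul_tmin hc, neg_inj] at h
  exact mul_left_cancel₀ (Nat.cast_ne_zero.mpr (NeZero.ne n)) h

theorem card_le_of_dtri_eq (x : Fin n → ℝ) (T : Finset (Fin n → ℝ))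
    (hsum : ∀ b ∈ T, ∑ i, x i = ∑ i, b i)
    (hgen : ∀ a ∈ T, ∀ b ∈ T, a ≠ b → ∀ i, a i ≠ b i)
    (hdist : ∀ a ∈ T, ∀ b ∈ T, dtri x a = dtri x b) :
    T.card ≤ n := by
  choose g hg using fun b : Fin n → ℝ => exists_tmin_eq fun i => b i - x i
  have hinj : Set.InjOn g T := by
    intro a ha b hb hab
    by_contra hne
    have htmin := tmin_sub_eq_of_dtri_eq (hsum a ha) (hsum b hb) (hdist a ha b hb)
    rw [hg a, hg b, hab, sub_left_inj] at htmin
    exact hgen a ha b hb hne (g b) htmin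
  simpa using Finset.card_le_card_of_injOn g (fun b _ => Finset.mem_univ (g b)) hinj

end

theorem stmt19_general {n : ℕ} [NeZero n] (S : Set (Fin n → ℝ))
    (hSH : ∀ s ∈ S, ∑ i, s i = 0)
    (hgen : ∀ a ∈ S, ∀ b ∈ S, a ≠ b → ∀ i, a i ≠ b i)
    (T : Set (Fin n → ℝ))
    (hcard : ∃ T' : Finset (Fin n → ℝ), ↑T' ⊆ T ∧ n < T'.card) :
    {x : Fin n → ℝ | (∑ i, x i = 0) ∧
      {b ∈ S | ∀ c ∈ S, dtri x b ≤ dtri x c} = T} = ∅ := by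
  refine Set.eq_empty_of_forall_notMem fun x ⟨hx, hT⟩ => ?_
  obtain ⟨T', hT'T, hlt⟩ := hcard
  have hmin : ∀ b ∈ T', b ∈ S ∧ ∀ c ∈ S, dtri x b ≤ dtri x c := fun b hb => by
    rw [← hT] at hT'T
    exact hT'T hb
  refine hlt.not_ge (card_le_of_dtri_eq x T' ?_ ?_ ?_)
  · exact fun b hb => by rw [hx, hSH b (hmin b hb).1]
  · exact fun a ha b hb => hgen a (hmin a ha).1 b (hmin b hb).1
  · exact fun a ha b hb =>
      le_antisymm ((hmin a ha).2 b (hmin b hb).1) ((hmin b hb).2 a (hmin a ha).1)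

theorem stmt19 {n : ℕ} [NeZero n] (S : Set (Fin n → ℝ))
    (hSH : ∀ s ∈ S, ∑ i, s i = 0)
    (hdisc : ∀ x : Fin n → ℝ, ¬ AccPt x (Filter.principal S))
    (hgen : ∀ a ∈ S, ∀ b ∈ S, a ≠ b → ∀ i, a i ≠ b i)
    (T : Set (Fin n → ℝ)) (hTS : T ⊆ S)
    (hcard : ∃ T' : Finset (Fin n → ℝ), ↑T' ⊆ T ∧ n < T'.card) :
    {x : Fin n → ℝ | (∑ i, x i = 0) ∧
      {b ∈ S | ∀ c ∈ S, dtri x b ≤ dtri x c} = T} = ∅ :=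
  stmt19_general S hSH hgen T hcard
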